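/- For every n ≥ 5, h_{2n}² - h_{2n-1}² + h_{2n-1}·h_{2n+1} - h_{2n-2}·h_{2n} = 0. -/

import Mathlib

def t (n : ℕ) : ℤ := (-1) ^ ((Nat.digits 2 n).sum)

def h : ℕ → ℤ
  | 0 => 0
  | 1 => 1
  | (n + 2) => t (n + 2) * h (n + 1) + h n

/-! The recursion gives `h (2m+2) - t (2m+2) h (2m+1) - h (2m) = 0`, and since
`t (2m+3) = -t (2m+2)` the left-hand side of the identity equals `h (2m+2)` times
that vanishing quantity. -/

lemma t_two_mul (n : ℕ) : t (2 * n) = t n := by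
  rcases Nat.eq_zero_or_pos n with rfl | hn
  · rfl
  · have hdigits : Nat.digits 2 (0 + 2 * n) = 0 :: Nat.digits 2 n :=
      Nat.digits_add 2 one_lt_two 0 n two_pos (Or.inr hn.ne')
    rw [t, t, ← zero_add (2 * n), hdigits, List.sum_cons, zero_add]

lemma t_two_mul_add_one (n : ℕ) : t (2 * n + 1) = -t n := by
  have hdigits : Nat.digits 2 (1 + 2 * n) = 1 :: Nat.digits 2 n :=
    Nat.digits_add 2 one_lt_two 1 n one_lt_two (Or.inl one_ne_zero)
  rw [t, t, add_comm, hdigits, List.sum_cons, pow_add]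
  ring

lemma t_two_mul_add_one_eq_neg (n : ℕ) : t (2 * n + 1) = -t (2 * n) := by
  rw [t_two_mul_add_one, t_two_mul]

lemma h_even_index_identity (m : ℕ) :
    h (2 * m + 2) ^ 2 - h (2 * m + 1) ^ 2 + h (2 * m + 1) * h (2 * m + 3) -
      h (2 * m) * h (2 * m + 2) = 0 := by
  have hsign : t (2 * m + 3) = -t (2 * m + 2) :=
    t_two_mul_add_one_eq_neg (m + 1)
  have heven : h (2 * m + 2) = t (2 * m + 2) * h (2 * m + 1) + h (2 * m) := rfl
  have hodd : h (2 * m + 3) = t (2 * m + 3) * h (2 * m + 2) + h (2 * m + 1) := rfl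
  rw [hodd, hsign, heven]
  ring

theorem stmt18 : ∀ n : ℕ, 5 ≤ n →
    h (2 * n) ^ 2 - h (2 * n - 1) ^ 2 + h (2 * n - 1) * h (2 * n + 1) -
      h (2 * n - 2) * h (2 * n) = 0 := by
  intro n _
  obtain ⟨m, rfl⟩ : ∃ m, n = m + 1 := ⟨n - 1, by omega⟩
  rw [show 2 * (m + 1) - 1 = 2 * m + 1 by omega, show 2 * (m + 1) - 2 = 2 * m by omega,
    show 2 * (m + 1) + 1 = 2 * m + 3 by ring, show 2 * (m + 1) = 2 * m + 2 by ring]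
  exact h_even_index_identity m
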